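/- arXiv:1306.1292 — 5 statements merged into one kernel-verified Lean document; each statement's English description precedes it below -/
import Mathlib

section
/- Let M₁ = U(N)·v₁ and M₂ = U(N)·v₂ be cyclic modules over a nilpotent Lie algebra N with ordered basis f₁,…,f_N, and fix a homogeneous monomial order on the PBW monomials. If p is an essential multi-exponent for M₁ and q is an essential multi-exponent for M₂, then p + q is an essential multi-exponent for the Cartan component M₁ ⊙ M₂ = U(N)·(v₁ ⊗ v₂) ⊆ M₁ ⊗ M₂. -/
open scoped TensorProduct

/-- Application of the PBW monomial `f₁^{p₁} ⋯ f_N^{p_N}` (with respect to the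
ordered basis `f₁, …, f_N` of a Lie algebra) to a vector of a Lie module. -/
def monomialVec {N : ℕ} {L M : Type*} [LieRing L] [AddCommGroup M]
    [LieRingModule L M] (f : Fin N → L) (p : Fin N → ℕ) (m : M) : M :=
  (List.finRange N).foldr (fun i x => (fun y => ⁅f i, y⁆)^[p i] x) m

/-- `p` is an essential multi-exponent for the cyclic vector `v` (with respect to the
ordered basis `f` and the monomial order `lo`) if `f^p v` is not in the span of the
vectors `f^q v` with `q < p`. -/
def IsEssential {N : ℕ} {L M : Type*} [LieRing L] [AddCommGroup M] [Module ℂ M]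
    [LieRingModule L M] (lo : LinearOrder (Fin N → ℕ)) (f : Fin N → L)
    (v : M) (p : Fin N → ℕ) : Prop :=
  monomialVec f p v ∉ Submodule.span ℂ {x | ∃ q, lo.lt q p ∧ x = monomialVec f q v}

/-!
Essentiality of `p` for `v` is witnessed by a functional `φ` with `φ (f^p v) ≠ 0` that kills
every `f^r v` with `r < p`. By the Leibniz rule,
`f^r (v₁ ⊗ v₂) = ∑_{a ≤ r} (∏ᵢ binom(rᵢ, aᵢ)) f^a v₁ ⊗ f^(r - a) v₂`, so the product functional
`φ₁ ⊗ φ₂` only sees the terms with `a ≮ p` and `r - a ≮ q`. As the monomial order is compatible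
with addition, for `r ≤ p + q` this forces `a = p` and `r = p + q`. Hence `φ₁ ⊗ φ₂` kills
`f^r (v₁ ⊗ v₂)` for every `r < p + q`, and its value at `r = p + q` is the nonzero number
`∏ᵢ binom(pᵢ + qᵢ, pᵢ) · φ₁ (f^p v₁) · φ₂ (f^q v₂)`.
-/

section MonomialVec

variable {N : ℕ} {L M : Type*} [LieRing L] [AddCommGroup M] [LieRingModule L M]

lemma monomialVec_succ (f : Fin (N + 1) → L) (p : Fin (N + 1) → ℕ) (m : M) :
    monomialVec f p m = (fun y => ⁅f 0, y⁆)^[p 0] (monomialVec (Fin.tail f) (Fin.tail p) m) := by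
  rw [monomialVec, List.finRange_succ, List.foldr_cons, List.foldr_map]
  rfl

lemma isEssential_iff_exists_dual [Module ℂ M] (lo : LinearOrder (Fin N → ℕ)) (f : Fin N → L)
    (v : M) (p : Fin N → ℕ) :
    IsEssential lo f v p ↔ ∃ φ : M →ₗ[ℂ] ℂ,
      φ (monomialVec f p v) ≠ 0 ∧ ∀ q, lo.lt q p → φ (monomialVec f q v) = 0 := by
  constructor
  · intro hp
    obtain ⟨φ, hφp, hφ⟩ := Submodule.exists_dual_map_eq_bot_of_notMem hp inferInstance
    exact ⟨φ, hφp, fun q hq =>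
      LinearMap.le_ker_iff_map.mpr hφ (Submodule.subset_span ⟨q, hq, rfl⟩)⟩
  · rintro ⟨φ, hφp, hφ⟩ hmem
    refine hφp (LinearMap.mem_ker.mp (Submodule.span_le.mpr ?_ hmem))
    rintro _ ⟨q, hq, rfl⟩
    exact hφ q hq

end MonomialVec

lemma Finset.sum_Iic_fin_succ {n : ℕ} {β : Type*} [AddCommMonoid β] (r : Fin (n + 1) → ℕ)
    (F : (Fin (n + 1) → ℕ) → β) :
    ∑ a ∈ Iic r, F a = ∑ j ∈ range (r 0 + 1), ∑ a ∈ Iic (Fin.tail r), F (Fin.cons j a) := by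
  rw [← sum_product']
  refine sum_equiv (Fin.consEquiv fun _ => ℕ).symm (fun a => ?_) (fun a _ => ?_)
  · simp [Pi.le_def, Fin.forall_fin_succ, Fin.tail]
  · simp [Fin.consEquiv]

lemma iterate_lie_eq_toEnd_pow (R : Type*) {L M : Type*} [CommRing R] [LieRing L]
    [LieAlgebra R L] [AddCommGroup M] [Module R M] [LieRingModule L M] [LieModule R L M]
    (x : L) (k : ℕ) :
    (fun y : M => ⁅x, y⁆)^[k] = ⇑(LieModule.toEnd R L M x ^ k) := by
  rw [Module.End.coe_pow]
  rfl

section TensorProduct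

variable {R L : Type*} [CommRing R] [LieRing L] [LieAlgebra R L] {M₁ M₂ : Type*}
  [AddCommGroup M₁] [Module R M₁] [LieRingModule L M₁] [LieModule R L M₁]
  [AddCommGroup M₂] [Module R M₂] [LieRingModule L M₂] [LieModule R L M₂]

lemma LieModule.toEnd_tensorProduct (x : L) :
    toEnd R L (M₁ ⊗[R] M₂) x = (toEnd R L M₁ x).rTensor M₂ + (toEnd R L M₂ x).lTensor M₁ :=
  TensorProduct.ext' fun m n => by simp [TensorProduct.LieModule.lie_tmul_right]

lemma iterate_lie_tmul (x : L) (k : ℕ) (m : M₁) (n : M₂) :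
    (fun y => ⁅x, y⁆)^[k] (m ⊗ₜ[R] n) =
      ∑ j ∈ Finset.range (k + 1), k.choose j •
        ((fun y => ⁅x, y⁆)^[j] m ⊗ₜ[R] (fun y => ⁅x, y⁆)^[k - j] n) := by
  have hcomm : Commute ((LieModule.toEnd R L M₁ x).rTensor M₂)
      ((LieModule.toEnd R L M₂ x).lTensor M₁) :=
    TensorProduct.ext' fun m n => by simp
  simp only [iterate_lie_eq_toEnd_pow R]
  rw [LieModule.toEnd_tensorProduct, hcomm.add_pow, LinearMap.sum_apply]
  refine Finset.sum_congr rfl fun j _ => ?_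
  simp [Module.End.mul_apply, LinearMap.rTensor_pow, LinearMap.lTensor_pow]

lemma monomialVec_tmul {N : ℕ} (f : Fin N → L) (r : Fin N → ℕ) (m : M₁) (n : M₂) :
    monomialVec f r (m ⊗ₜ[R] n) =
      ∑ a ∈ Finset.Iic r, (∏ i, (r i).choose (a i)) •
        (monomialVec f a m ⊗ₜ[R] monomialVec f (r - a) n) := by
  induction N with
  | zero =>
    rw [Finset.sum_eq_single_of_mem r (Finset.mem_Iic.2 le_rfl)
      fun a _ ha => (ha (Subsingleton.elim a r)).elim]
    simp [monomialVec]
  | succ N ih =>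
    rw [monomialVec_succ, ih, Finset.sum_Iic_fin_succ, iterate_lie_eq_toEnd_pow R, map_sum,
      Finset.sum_comm]
    refine Finset.sum_congr rfl fun a _ => ?_
    rw [map_nsmul, ← iterate_lie_eq_toEnd_pow, iterate_lie_tmul, Finset.smul_sum]
    refine Finset.sum_congr rfl fun j _ => ?_
    rw [smul_smul]
    simp only [monomialVec_succ f]
    have htail : Fin.tail (r - Fin.cons j a) = Fin.tail r - a := rfl
    simp [htail, Fin.prod_univ_succ, Fin.tail, mul_comm]

lemma dualDistrib_monomialVec_tmul {N : ℕ} (φ₁ : Module.Dual R M₁) (φ₂ : Module.Dual R M₂)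
    (f : Fin N → L) (r : Fin N → ℕ) (m : M₁) (n : M₂) :
    TensorProduct.dualDistrib R M₁ M₂ (φ₁ ⊗ₜ φ₂) (monomialVec f r (m ⊗ₜ[R] n)) =
      ∑ a ∈ Finset.Iic r, (∏ i, (r i).choose (a i)) •
        (φ₁ (monomialVec f a m) * φ₂ (monomialVec f (r - a) n)) := by
  simp [monomialVec_tmul]

end TensorProduct

lemma eq_and_eq_of_not_lt_add {α : Type*} [AddCommMonoid α] (lo : LinearOrder α)
    (hadd : ∀ a b c : α, lo.lt a b → lo.lt (a + c) (b + c)) {a b c d : α}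
    (h : ¬ lo.lt (a + b) (c + d)) (hc : ¬ lo.lt c a) (hd : ¬ lo.lt d b) : a = c ∧ b = d := by
  let := lo
  have : AddRightStrictMono α := ⟨fun c _ _ h => hadd _ _ c h⟩
  have : AddLeftStrictMono α := ⟨fun c a b h => by simpa only [add_comm c] using hadd a b c h⟩
  exact (add_le_add_iff_of_ge (not_lt.1 hc) (not_lt.1 hd)).1 (not_lt.1 h)

theorem stmt4_general {N : ℕ} {L : Type*} [LieRing L] [LieAlgebra ℂ L]
    {M₁ M₂ : Type*}
    [AddCommGroup M₁] [Module ℂ M₁] [LieRingModule L M₁] [LieModule ℂ L M₁]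
    [AddCommGroup M₂] [Module ℂ M₂] [LieRingModule L M₂] [LieModule ℂ L M₂]
    (f : Fin N → L)
    (lo : LinearOrder (Fin N → ℕ))
    (hadd : ∀ p q r : Fin N → ℕ, lo.lt p q → lo.lt (p + r) (q + r))
    (v₁ : M₁) (v₂ : M₂) (p q : Fin N → ℕ)
    (hp : IsEssential lo f v₁ p) (hq : IsEssential lo f v₂ q) :
    IsEssential lo f (v₁ ⊗ₜ[ℂ] v₂ : M₁ ⊗[ℂ] M₂) (p + q) := by
  obtain ⟨φ₁, hφ₁p, hφ₁⟩ := (isEssential_iff_exists_dual lo f v₁ p).1 hp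
  obtain ⟨φ₂, hφ₂q, hφ₂⟩ := (isEssential_iff_exists_dual lo f v₂ q).1 hq
  have hsupport : ∀ r, ¬ lo.lt (p + q) r → ∀ a ∈ Finset.Iic r,
      φ₁ (monomialVec f a v₁) * φ₂ (monomialVec f (r - a) v₂) ≠ 0 → p = a ∧ p + q = r := by
    intro r hr a ha hne
    have hsum : a + (r - a) = r := add_tsub_cancel_of_le (Finset.mem_Iic.1 ha)
    obtain ⟨rfl, rfl⟩ := eq_and_eq_of_not_lt_add lo hadd (hsum ▸ hr)
      (fun h => hne (by rw [hφ₁ a h, zero_mul])) (fun h => hne (by rw [hφ₂ _ h, mul_zero]))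
    exact ⟨rfl, hsum⟩
  refine (isEssential_iff_exists_dual lo f _ _).2
    ⟨TensorProduct.dualDistrib ℂ M₁ M₂ (φ₁ ⊗ₜ φ₂), ?_, fun r hr => ?_⟩
  · rw [dualDistrib_monomialVec_tmul,
      Finset.sum_eq_single_of_mem p (Finset.mem_Iic.2 le_self_add)]
    · simp [hφ₁p, hφ₂q, Finset.prod_ne_zero_iff,
        fun i => (Nat.choose_pos (Nat.le_add_right (p i) (q i))).ne']
    · intro a ha hne
      by_contra h
      exact hne (hsupport _ (@lt_irrefl _ lo.toPreorder _) a ha (right_ne_zero_of_smul h)).1.symm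
  · rw [dualDistrib_monomialVec_tmul]
    refine Finset.sum_eq_zero fun a ha => ?_
    by_contra h
    obtain ⟨-, rfl⟩ := hsupport r (@lt_asymm _ lo.toPreorder _ _ hr) a ha (right_ne_zero_of_smul h)
    exact @lt_irrefl _ lo.toPreorder _ hr

/-- If `p` is essential for the cyclic module `(M₁, v₁)` and `q` is
essential for `(M₂, v₂)`, then `p + q` is essential for the Cartan component
`U(N)·(v₁ ⊗ v₂) ⊆ M₁ ⊗ M₂`, i.e. for the vector `v₁ ⊗ v₂` of `M₁ ⊗ M₂`.
Here `lo` is a homogeneous monomial order on `ℕ^N`: a total order compatible with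
addition and refining the total-degree order. -/
theorem stmt4 {N : ℕ} {L : Type*} [LieRing L] [LieAlgebra ℂ L]
    {M₁ M₂ : Type*}
    [AddCommGroup M₁] [Module ℂ M₁] [LieRingModule L M₁] [LieModule ℂ L M₁]
    [AddCommGroup M₂] [Module ℂ M₂] [LieRingModule L M₂] [LieModule ℂ L M₂]
    (f : Fin N → L)
    (lo : LinearOrder (Fin N → ℕ))
    (hadd : ∀ p q r : Fin N → ℕ, lo.lt p q → lo.lt (p + r) (q + r))
    (hhom : ∀ p q : Fin N → ℕ, (∑ i, p i) < (∑ i, q i) → lo.lt p q)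
    (v₁ : M₁) (v₂ : M₂) (p q : Fin N → ℕ)
    (hp : IsEssential lo f v₁ p) (hq : IsEssential lo f v₂ q) :
    IsEssential lo f (v₁ ⊗ₜ[ℂ] v₂ : M₁ ⊗[ℂ] M₂) (p + q) :=
  stmt4_general f lo hadd v₁ v₂ p q hp hq
end

section
/- Let n ≥ 1 and consider the polytope P(m₁, m₂) ⊂ ℝ³_{≥0} for sl₃ (type A₂), given for non-negative integers m₁, m₂ by the inequalities p₁ ≤ m₁, p₃ ≤ m₂, p₁ + p₂ + p₃ ≤ m₁ + m₂ on points (p₁, p₂, p₃) with all coordinates non-negative. Then the number of lattice points in P(m₁, m₂) equals (m₁+1)(m₂+1)(m₁+m₂+2)/2, the dimension of the irreducible sl₃-module of highest weight m₁ω₁ + m₂ω₂. -/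
open Finset

private lemma gauss2 (n : ℕ) (C : ℤ) :
    ∑ a ∈ range n, (C - 2 * a) = n * (C + 1 - n) := by
  induction n with
  | zero => simp
  | succ n ih =>
    rw [Finset.sum_range_succ, ih]
    push_cast
    ring

private lemma gauss1 (n : ℕ) (K : ℤ) :
    2 * ∑ c ∈ range n, (K - c) = n * (2 * K + 1 - n) := by
  induction n with
  | zero => simp
  | succ n ih =>
    rw [Finset.sum_range_succ, mul_add, ih]
    push_cast
    ring

/-- the number of lattice points of the type `A₂` polytope
`P(m₁, m₂) = {(p₁,p₂,p₃) ∈ ℝ³_{≥0} : p₁ ≤ m₁, p₃ ≤ m₂, p₁+p₂+p₃ ≤ m₁+m₂}`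
equals `(m₁+1)(m₂+1)(m₁+m₂+2)/2`, the dimension of the irreducible `sl₃`-module
of highest weight `m₁ω₁ + m₂ω₂`. -/
theorem stmt9 (m₁ m₂ : ℕ) :
    {p : Fin 3 → ℤ | (∀ i, 0 ≤ p i) ∧ p 0 ≤ (m₁ : ℤ) ∧ p 2 ≤ (m₂ : ℤ) ∧
        p 0 + p 1 + p 2 ≤ (m₁ : ℤ) + (m₂ : ℤ)}.ncard
      = (m₁ + 1) * (m₂ + 1) * (m₁ + m₂ + 2) / 2 := by
  classical
  set b : Fin 3 → ℤ := ![(m₁ : ℤ), (m₁ : ℤ) + m₂, (m₂ : ℤ)] with hb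
  set T : Finset (Fin 3 → ℤ) :=
    (Fintype.piFinset fun i => Finset.Icc 0 (b i)).filter
      (fun p => p 0 + p 1 + p 2 ≤ (m₁ : ℤ) + m₂) with hT
  have hset : {p : Fin 3 → ℤ | (∀ i, 0 ≤ p i) ∧ p 0 ≤ (m₁ : ℤ) ∧ p 2 ≤ (m₂ : ℤ) ∧
        p 0 + p 1 + p 2 ≤ (m₁ : ℤ) + (m₂ : ℤ)} = ↑T := by
    ext p
    simp only [hT, Set.mem_setOf_eq, Finset.coe_filter, Fintype.mem_piFinset,
      Finset.mem_Icc]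
    constructor
    · rintro ⟨h0, h1, h2, h3⟩
      refine ⟨fun i => ⟨h0 i, ?_⟩, h3⟩
      have a0 := h0 0; have a1 := h0 1; have a2 := h0 2
      fin_cases i <;> simp [hb] <;> omega
    · rintro ⟨h, h3⟩
      have g0 := h 0; have g1 := h 1; have g2 := h 2
      simp [hb] at g0 g1 g2
      exact ⟨fun i => (h i).1, g0.2, g2.2, h3⟩
  rw [hset, Set.ncard_coe_finset]
  set Sig : Finset (Σ _ : ℕ, Σ _ : ℕ, ℕ) :=
    (range (m₁ + 1)).sigma (fun a =>
      (range (m₂ + 1)).sigma (fun c => range (m₁ + m₂ + 1 - a - c))) with hSig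
  have hcard : T.card = Sig.card := by
    apply Finset.card_bij (fun p _ => (⟨(p 0).toNat, (p 2).toNat, (p 1).toNat⟩ :
      Σ _ : ℕ, Σ _ : ℕ, ℕ))
    · intro p hp
      simp only [hT, Finset.mem_filter, Fintype.mem_piFinset, Finset.mem_Icc] at hp
      obtain ⟨h, h3⟩ := hp
      have g0 := h 0; have g1 := h 1; have g2 := h 2
      simp [hb] at g0 g1 g2
      simp only [hSig, Finset.mem_sigma, Finset.mem_range]
      omega
    · intro p hp q hq hpq
      simp only [hT, Finset.mem_filter, Fintype.mem_piFinset, Finset.mem_Icc] at hp hq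
      simp only [Sigma.mk.inj_iff, heq_eq_eq] at hpq
      have g0 := (hp.1 0).1; have g1 := (hp.1 1).1; have g2 := (hp.1 2).1
      have k0 := (hq.1 0).1; have k1 := (hq.1 1).1; have k2 := (hq.1 2).1
      obtain ⟨e0, e2, e1⟩ := hpq
      have f0 : p 0 = q 0 := by omega
      have f1 : p 1 = q 1 := by omega
      have f2 : p 2 = q 2 := by omega
      funext i
      fin_cases i
      · exact f0
      · exact f1
      · exact f2
    · rintro ⟨a, c, v⟩ hx
      simp only [hSig, Finset.mem_sigma, Finset.mem_range] at hx
      obtain ⟨ha, hc, hv⟩ := hx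
      refine ⟨![(a : ℤ), (v : ℤ), (c : ℤ)], ?_, ?_⟩
      · simp only [hT, Finset.mem_filter, Fintype.mem_piFinset, Finset.mem_Icc]
        constructor
        · intro i
          fin_cases i <;> simp [hb] <;> omega
        · simp
          omega
      · simp
  rw [hcard]
  have hcard2 : Sig.card = ∑ a ∈ range (m₁ + 1), ∑ c ∈ range (m₂ + 1),
      (m₁ + m₂ + 1 - a - c) := by
    simp [hSig, Finset.card_sigma]
  rw [hcard2]
  -- now the arithmetic
  set P : ℕ := (m₁ + 1) * (m₂ + 1) * (m₁ + m₂ + 2) with hP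
  have key : 2 * ((∑ a ∈ range (m₁ + 1), ∑ c ∈ range (m₂ + 1),
      (m₁ + m₂ + 1 - a - c) : ℕ) : ℤ) = (P : ℤ) := by
    have cast_sum : ((∑ a ∈ range (m₁ + 1), ∑ c ∈ range (m₂ + 1),
        (m₁ + m₂ + 1 - a - c) : ℕ) : ℤ)
        = ∑ a ∈ range (m₁ + 1), ∑ c ∈ range (m₂ + 1),
          (((m₁ : ℤ) + m₂ + 1 - a) - c) := by
      push_cast
      refine Finset.sum_congr rfl fun a ha => Finset.sum_congr rfl fun c hc => ?_
      simp only [Finset.mem_range] at ha hc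
      omega
    rw [cast_sum]
    have inner : ∀ a ∈ range (m₁ + 1),
        2 * ∑ c ∈ range (m₂ + 1), (((m₁ : ℤ) + m₂ + 1 - a) - c)
          = (m₂ + 1 : ℤ) * ((2 * m₁ + m₂ + 2) - 2 * a) := by
      intro a _
      rw [gauss1 (m₂ + 1) ((m₁ : ℤ) + m₂ + 1 - a)]
      push_cast
      ring
    calc 2 * ∑ a ∈ range (m₁ + 1), ∑ c ∈ range (m₂ + 1),
          (((m₁ : ℤ) + m₂ + 1 - a) - c)
        = ∑ a ∈ range (m₁ + 1), 2 * ∑ c ∈ range (m₂ + 1),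
          (((m₁ : ℤ) + m₂ + 1 - a) - c) := by rw [Finset.mul_sum]
      _ = ∑ a ∈ range (m₁ + 1), (m₂ + 1 : ℤ) * ((2 * m₁ + m₂ + 2) - 2 * a) :=
          Finset.sum_congr rfl inner
      _ = (m₂ + 1 : ℤ) * ∑ a ∈ range (m₁ + 1), (((2 * m₁ + m₂ + 2) : ℤ) - 2 * a) := by
          rw [Finset.mul_sum]
      _ = (P : ℤ) := by
          rw [gauss2 (m₁ + 1) ((2 * (m₁ : ℤ) + m₂ + 2))]
          simp only [hP]
          push_cast
          ring
  omega
end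

section
/- For the type A₂ polytopes P(m₁, m₂) = {(p₁,p₂,p₃) ∈ ℝ³_{≥0} : p₁ ≤ m₁, p₃ ≤ m₂, p₁+p₂+p₃ ≤ m₁+m₂}, the lattice points satisfy the Minkowski sum property: for all non-negative integers m₁, m₂, m₁', m₂', the set of lattice points of P(m₁+m₁', m₂+m₂') equals the Minkowski sum of the set of lattice points of P(m₁, m₂) and the set of lattice points of P(m₁', m₂'). -/
/-!
The defining inequalities of `P(m₁, m₂)` are linear with right-hand sides additive in
`(m₁, m₂)`, so the sum of lattice points of `P(m₁, m₂)` and `P(m₁', m₂')` lies in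
`P(m₁ + m₁', m₂ + m₂')`. Conversely, a lattice point `p` of `P(m₁ + m₁', m₂ + m₂')` splits
greedily: take `a₀ = min p₀ m₁`, `a₂ = min p₂ m₂` and then as much of `p₁` as the budget
`m₁ + m₂ - a₀ - a₂` allows. Then `a` is a lattice point of `P(m₁, m₂)`, and `p - a` lies in
`P(m₁', m₂')`: if `a₁ = p₁` its coordinate sum is `(p₀ - a₀) + (p₂ - a₂) ≤ m₁' + m₂'`, and
otherwise `a` exhausts the budget `m₁ + m₂`.
-/

open scoped Pointwise

/-- The set of lattice points of the type `A₂` Dyck-path polytope `P(m₁, m₂)`. -/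
def latticeA2 (m₁ m₂ : ℕ) : Set (Fin 3 → ℤ) :=
  {p | (∀ i, 0 ≤ p i) ∧ p 0 ≤ (m₁ : ℤ) ∧ p 2 ≤ (m₂ : ℤ) ∧
    p 0 + p 1 + p 2 ≤ (m₁ : ℤ) + (m₂ : ℤ)}

theorem latticeA2_add_subset (m₁ m₂ m₁' m₂' : ℕ) :
    latticeA2 m₁ m₂ + latticeA2 m₁' m₂' ⊆ latticeA2 (m₁ + m₁') (m₂ + m₂') := by
  rintro _ ⟨a, ⟨ha, ha₀, ha₂, ha_sum⟩, b, ⟨hb, hb₀, hb₂, hb_sum⟩, rfl⟩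
  refine ⟨fun i => add_nonneg (ha i) (hb i), ?_, ?_, ?_⟩ <;>
    simp only [Pi.add_apply] <;> push_cast <;> omega

def greedyPartA2 (m₁ m₂ : ℕ) (p : Fin 3 → ℤ) : Fin 3 → ℤ :=
  ![min (p 0) m₁, min (p 1) ((m₁ : ℤ) + m₂ - min (p 0) m₁ - min (p 2) m₂), min (p 2) m₂]

theorem greedyPartA2_mem_latticeA2 (m₁ m₂ : ℕ) {p : Fin 3 → ℤ} (hp : ∀ i, 0 ≤ p i) :
    greedyPartA2 m₁ m₂ p ∈ latticeA2 m₁ m₂ := by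
  have hp₀ := hp 0
  have hp₁ := hp 1
  have hp₂ := hp 2
  refine ⟨fun i => ?_, ?_, ?_, ?_⟩
  on_goal 1 => fin_cases i
  all_goals
    simp only [greedyPartA2, Fin.zero_eta, Fin.mk_one, Fin.reduceFinMk,
      Matrix.cons_val_zero, Matrix.cons_val_one, Matrix.cons_val_two, Matrix.head_cons,
      Matrix.tail_cons]
    omega

theorem sub_greedyPartA2_mem_latticeA2 {m₁ m₂ m₁' m₂' : ℕ} {p : Fin 3 → ℤ}
    (hp : p ∈ latticeA2 (m₁ + m₁') (m₂ + m₂')) :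
    p - greedyPartA2 m₁ m₂ p ∈ latticeA2 m₁' m₂' := by
  obtain ⟨-, hp₀, hp₂, hp_sum⟩ := hp
  push_cast at hp₀ hp₂ hp_sum
  refine ⟨fun i => ?_, ?_, ?_, ?_⟩
  on_goal 1 => fin_cases i
  all_goals
    simp only [greedyPartA2, Pi.sub_apply, Fin.zero_eta, Fin.mk_one, Fin.reduceFinMk,
      Matrix.cons_val_zero, Matrix.cons_val_one, Matrix.cons_val_two, Matrix.head_cons,
      Matrix.tail_cons]
    omega

/-- for the type `A₂` polytopes, the lattice points satisfy the
Minkowski sum property: the lattice points of `P(m₁+m₁', m₂+m₂')` are exactly the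
sums of a lattice point of `P(m₁, m₂)` and a lattice point of `P(m₁', m₂')`. -/
theorem stmt10 (m₁ m₂ m₁' m₂' : ℕ) :
    latticeA2 (m₁ + m₁') (m₂ + m₂') = latticeA2 m₁ m₂ + latticeA2 m₁' m₂' := by
  refine Set.Subset.antisymm (fun p hp => ?_) (latticeA2_add_subset m₁ m₂ m₁' m₂')
  exact ⟨greedyPartA2 m₁ m₂ p, greedyPartA2_mem_latticeA2 m₁ m₂ hp.1,
    p - greedyPartA2 m₁ m₂ p, sub_greedyPartA2_mem_latticeA2 hp, add_sub_cancel _ _⟩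
end

section
/- For the G₂ polytopes P(k, l) ⊂ ℝ⁶_{≥0} defined by the seven inequalities p₅ ≤ l, p₆ ≤ k, p₂+p₃+p₆ ≤ k+l, p₃+p₄+p₆ ≤ k+l, p₄+p₅+p₆ ≤ k+l, p₁+p₂+p₃+p₄+p₅ ≤ k+2l, p₂+p₃+p₄+p₅+p₆ ≤ k+2l, the set of lattice points of P(k+k', l+l') equals the Minkowski sum of the sets of lattice points of P(k, l) and of P(k', l'), for all non-negative integers k, l, k', l'. -/
/-!
`P(k, l)` has the integer decomposition property with respect to the two fundamental polytopes:
every lattice point of `P(k + 1, l)` (resp. `P(k, l + 1)`) is a lattice point of `P(k, l)` plus one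
of `P(1, 0)` (resp. `P(0, 1)`). The summand is found greedily: it has to be at least `1` on every
constraint that the point meets with equality, and a short case analysis on the tight constraints
and on the support of the point produces it. Hence `P(k, l) ∩ ℤ⁶ = k • P(1, 0) + l • P(0, 1)` as
Minkowski sums of lattice points, and the theorem follows from `(k + k') • A = k • A + k' • A`.
-/

open scoped Pointwise

/-- The set of lattice points of the `G₂` polytope `P(k, l) ⊂ ℝ⁶_{≥0}`. -/
def latticeG2 (k l : ℕ) : Set (Fin 6 → ℤ) :=
  {p | (∀ i, 0 ≤ p i) ∧
    p 4 ≤ (l : ℤ) ∧ p 5 ≤ (k : ℤ) ∧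
    p 1 + p 2 + p 5 ≤ (k : ℤ) + l ∧
    p 2 + p 3 + p 5 ≤ (k : ℤ) + l ∧
    p 3 + p 4 + p 5 ≤ (k : ℤ) + l ∧
    p 0 + p 1 + p 2 + p 3 + p 4 ≤ (k : ℤ) + 2 * l ∧
    p 1 + p 2 + p 3 + p 4 + p 5 ≤ (k : ℤ) + 2 * l}

theorem eq_nsmul_add_nsmul_of_add_one {M : Type*} [AddCommMonoid M] (f : ℕ → ℕ → M)
    (h₀ : f 0 0 = 0) (hk : ∀ k l, f (k + 1) l = f k l + f 1 0)
    (hl : ∀ k l, f k (l + 1) = f k l + f 0 1) (k l : ℕ) :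
    f k l = k • f 1 0 + l • f 0 1 := by
  induction k with
  | zero =>
    induction l with
    | zero => simp [h₀]
    | succ l ih => rw [hl, ih, succ_nsmul, add_assoc]
  | succ k ih => rw [hk, ih, succ_nsmul, add_right_comm]

theorem mem_latticeG2_iff {k l : ℕ} {p : Fin 6 → ℤ} :
    p ∈ latticeG2 k l ↔
      0 ≤ p 0 ∧ 0 ≤ p 1 ∧ 0 ≤ p 2 ∧ 0 ≤ p 3 ∧ 0 ≤ p 4 ∧ 0 ≤ p 5 ∧
      p 4 ≤ (l : ℤ) ∧ p 5 ≤ (k : ℤ) ∧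
      p 1 + p 2 + p 5 ≤ (k : ℤ) + l ∧
      p 2 + p 3 + p 5 ≤ (k : ℤ) + l ∧
      p 3 + p 4 + p 5 ≤ (k : ℤ) + l ∧
      p 0 + p 1 + p 2 + p 3 + p 4 ≤ (k : ℤ) + 2 * l ∧
      p 1 + p 2 + p 3 + p 4 + p 5 ≤ (k : ℤ) + 2 * l := by
  constructor
  · rintro ⟨h, hrest⟩
    exact ⟨h 0, h 1, h 2, h 3, h 4, h 5, hrest⟩
  · rintro ⟨h0, h1, h2, h3, h4, h5, hrest⟩
    exact ⟨fun i => by fin_cases i <;> assumption, hrest⟩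

theorem latticeG2_zero_zero : latticeG2 0 0 = 0 := by
  refine subset_antisymm (fun p hp => ?_) (Set.zero_subset.2 ?_)
  · rw [mem_latticeG2_iff] at hp
    funext i
    fin_cases i <;> simp only [Fin.isValue, Fin.zero_eta, Fin.mk_one, Fin.reduceFinMk,
      Pi.zero_apply] <;> omega
  · simp [mem_latticeG2_iff]

theorem latticeG2_add_subset (k l k' l' : ℕ) :
    latticeG2 k l + latticeG2 k' l' ⊆ latticeG2 (k + k') (l + l') := by
  rintro _ ⟨x, hx, y, hy, rfl⟩
  rw [mem_latticeG2_iff] at hx hy ⊢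
  simp only [Pi.add_apply]
  push_cast
  omega

theorem latticeG2_add_one_left (k l : ℕ) :
    latticeG2 (k + 1) l = latticeG2 k l + latticeG2 1 0 := by
  refine subset_antisymm (fun p hp => ?_) (latticeG2_add_subset k l 1 0)
  suffices ∃ q ∈ latticeG2 1 0, p - q ∈ latticeG2 k l by
    obtain ⟨q, hq, hpq⟩ := this
    exact ⟨p - q, hpq, q, hq, sub_add_cancel p q⟩
  rw [mem_latticeG2_iff] at hp
  push_cast at hp
  /- If `p₅ > 0`, removing `e₅` relieves every constraint containing `p₅`; the only other one that
  can be tight, on `p₀ + ⋯ + p₄`, is relieved by also removing `e₀`. Otherwise the tight constraints are index intervals in `{0, …, 3}`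
  all ending at `3`, except the one for `p₁ + p₂ + p₅`, which ends at `2`: remove `e_i` for the
  largest `i` below that bound with `p_i > 0`. -/
  refine ⟨if 0 < p 5 then
        (if (k : ℤ) + 2 * l < p 0 + p 1 + p 2 + p 3 + p 4 then ![1, 0, 0, 0, 0, 1]
        else ![0, 0, 0, 0, 0, 1])
      else if (k : ℤ) + l < p 1 + p 2 + p 5 then
        (if 0 < p 2 then ![0, 0, 1, 0, 0, 0] else ![0, 1, 0, 0, 0, 0])
      else if 0 < p 3 then ![0, 0, 0, 1, 0, 0]
      else if 0 < p 2 then ![0, 0, 1, 0, 0, 0]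
      else if 0 < p 1 then ![0, 1, 0, 0, 0, 0]
      else if 0 < p 0 then ![1, 0, 0, 0, 0, 0]
      else 0, ?_⟩
  rw [mem_latticeG2_iff, mem_latticeG2_iff]
  split_ifs <;> simp only [Fin.isValue, Pi.sub_apply, Pi.zero_apply, Matrix.cons_val,
    sub_zero, Nat.cast_zero, Nat.cast_one] <;> omega

theorem latticeG2_add_one_right (k l : ℕ) :
    latticeG2 k (l + 1) = latticeG2 k l + latticeG2 0 1 := by
  refine subset_antisymm (fun p hp => ?_) (latticeG2_add_subset k l 0 1)
  suffices ∃ q ∈ latticeG2 0 1, p - q ∈ latticeG2 k l by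
    obtain ⟨q, hq, hpq⟩ := this
    exact ⟨p - q, hpq, q, hq, sub_add_cancel p q⟩
  rw [mem_latticeG2_iff] at hp
  push_cast at hp
  obtain ⟨d, hd⟩ : ∃ d, d = p 0 + p 1 + p 2 + p 3 + p 4 - (k + 2 * l) := ⟨_, rfl⟩
  /- Here `q₅ = 0` and `{i ∈ [1, 4] | q_i = 1}` is an independent set of the path `1 - 2 - 3 - 4`
  inside the support of `p` meeting every tight constraint. The coordinate `q₀` occurs only in
  the constraint on `p₀ + ⋯ + p₄`, so it is chosen last to absorb the excess `d` left there. -/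
  refine ⟨if 0 < p 2 then
        (if 0 < p 4 then ![max 0 (d - 2), 0, 1, 0, 1, 0]
        else if 0 < p 1 ∧ 0 < p 3 then ![max 0 (d - 2), 1, 0, 1, 0, 0]
        else if (k : ℤ) + l < p 3 + p 4 + p 5 then ![max 0 (d - 1), 0, 0, 1, 0, 0]
        else ![max 0 (d - 1), 0, 1, 0, 0, 0])
      else if 0 < p 1 then
        (if (k : ℤ) + l < p 2 + p 3 + p 5 then ![max 0 (d - 2), 1, 0, 1, 0, 0]
        else if 0 < p 4 then ![max 0 (d - 2), 1, 0, 0, 1, 0]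
        else if 0 < p 3 then ![max 0 (d - 2), 1, 0, 1, 0, 0]
        else ![max 0 (d - 1), 1, 0, 0, 0, 0])
      else
        (if (k : ℤ) + l < p 2 + p 3 + p 5 then ![max 0 (d - 1), 0, 0, 1, 0, 0]
        else if 0 < p 4 then ![max 0 (d - 1), 0, 0, 0, 1, 0]
        else if 0 < p 3 then ![max 0 (d - 1), 0, 0, 1, 0, 0]
        else ![max 0 d, 0, 0, 0, 0, 0]), ?_⟩
  rw [mem_latticeG2_iff, mem_latticeG2_iff]
  split_ifs <;> simp only [Fin.isValue, Pi.sub_apply, Matrix.cons_val,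
    sub_zero, Nat.cast_zero, Nat.cast_one] <;> omega

theorem latticeG2_eq_nsmul_add_nsmul (k l : ℕ) :
    latticeG2 k l = k • latticeG2 1 0 + l • latticeG2 0 1 :=
  eq_nsmul_add_nsmul_of_add_one latticeG2 latticeG2_zero_zero latticeG2_add_one_left
    latticeG2_add_one_right k l

/-- the lattice points of the `G₂` polytope `P(k+k', l+l')` are
exactly the Minkowski sums of lattice points of `P(k, l)` and of `P(k', l')`. -/
theorem stmt12 (k l k' l' : ℕ) :
    latticeG2 (k + k') (l + l') = latticeG2 k l + latticeG2 k' l' := by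
  rw [latticeG2_eq_nsmul_add_nsmul, latticeG2_eq_nsmul_add_nsmul k l,
    latticeG2_eq_nsmul_add_nsmul k' l', add_nsmul, add_nsmul]
  abel
end

section
/- In type A_n, for the Dyck-path polytope P(ω_k) ⊂ ℝ^{n(n+1)/2}_{≥0} of the k-th fundamental weight (defined by the inequalities: for every Dyck path b = (β₁,…,β_r) starting at a simple root α_i and ending at a simple root α_j with i ≤ k ≤ j, one has ∑_t p_{β_t} ≤ 1; and for Dyck paths with j < k or i > k, ∑_t p_{β_t} ≤ 0), the number of lattice points of P(ω_k) equals binom(n+1, k), the dimension of Λ^k(ℂ^{n+1}). -/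
/-- A Dyck path in type `A_n` (0-based): a nonempty sequence of positive roots
`α_{a,b}` (recorded as pairs `(a, b)` with `a ≤ b`), starting and ending at simple
roots (diagonal pairs), each step increasing one of the two coordinates by `1`. -/
def IsDyckPath {n : ℕ} (L : List (Fin n × Fin n)) : Prop :=
  L ≠ [] ∧
  (∀ r ∈ L, r.1 ≤ r.2) ∧
  (∃ a, L.head? = some (a, a)) ∧
  (∃ b, L.getLast? = some (b, b)) ∧
  List.Chain' (fun r r' : Fin n × Fin n =>
    ((r'.1 : ℕ) = (r.1 : ℕ) + 1 ∧ r'.2 = r.2) ∨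
     (r'.1 = r.1 ∧ ((r'.2 : ℕ) = (r.2 : ℕ) + 1))) L

/-!
Dyck paths are exactly the saturated chains `(a, a) ⋖ ⋯ ⋖ (b, b)` of the product order on
`Fin n × Fin n` that stay above the diagonal. Any two comparable roots `(a, b) ≤ (a', b')` with
`a' ≤ b` lie on a common Dyck path, so the path inequalities force a lattice point to be the
indicator function of an antichain of the band `a ≤ k ≤ b`; conversely a Dyck path from `α_a` to
`α_b` is a chain, so it meets such an antichain at most once, and only if `a ≤ k ≤ b`.

In a product of two linear orders, an antichain `F` is determined by its projections `A` and `B`: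
the number of elements of `A` below `r.1` equals the number of elements of `B` above `r.2` for
every `r ∈ F`. Conversely any `A`, `B` of equal size arise, by matching `A` in increasing with `B`
in decreasing order. Hence the lattice points are counted by
`∑ₘ C(k+1, m) C(n-k, m) = C(n+1, k+1)` (Vandermonde).
-/

open Finset

theorem Nat.sum_range_choose_mul_choose (m n : ℕ) :
    ∑ i ∈ range (m + 1), m.choose i * n.choose i = (m + n).choose m := by
  rw [add_choose_eq, ← Finset.Nat.sum_antidiagonal_swap,
    Finset.Nat.sum_antidiagonal_eq_sum_range_succ_mk]
  refine sum_congr rfl fun i hi => ?_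
  rw [Prod.swap_prod_mk, choose_symm (mem_range_succ_iff.1 hi)]

theorem Finset.card_filter_card_eq_powerset_product {α β : Type*} (s : Finset α)
    (t : Finset β) :
    #{q ∈ s.powerset ×ˢ t.powerset | #q.2 = #q.1} = (#s + #t).choose #s := by
  rw [card_filter, sum_product]
  simp_rw [← card_filter, ← powersetCard_eq_filter, card_powersetCard]
  rw [sum_powerset_apply_card (fun m => (#t).choose m)]
  simp_rw [smul_eq_mul]
  exact Nat.sum_range_choose_mul_choose _ _

section ProductAntichain

variable {α β : Type*} [LinearOrder α] [LinearOrder β]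

theorem Finset.strictAntiOn_card_filter_lt (B : Finset β) :
    StrictAntiOn (fun b => #{x ∈ B | b < x}) B := by
  intro b _ b' hb' hbb'
  refine card_lt_card ((ssubset_iff_of_subset fun x hx => ?_).2 ⟨b', ?_, ?_⟩)
  · simp only [mem_filter] at hx ⊢
    exact ⟨hx.1, hbb'.trans hx.2⟩
  · simpa using ⟨hb', hbb'⟩
  · simp

namespace IsAntichain

theorem fst_lt_iff_snd_lt {F : Set (α × β)} (hF : IsAntichain (· ≤ ·) F) {r s : α × β}
    (hr : r ∈ F) (hs : s ∈ F) : r.1 < s.1 ↔ s.2 < r.2 := by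
  constructor
  · intro h
    by_contra! h'
    exact hF hr hs (fun e => h.ne (congrArg Prod.fst e)) ⟨h.le, h'⟩
  · intro h
    by_contra! h'
    exact hF hs hr (fun e => h.ne (congrArg Prod.snd e)) ⟨h', h.le⟩

theorem injOn_fst {F : Set (α × β)} (hF : IsAntichain (· ≤ ·) F) : F.InjOn Prod.fst := by
  intro r hr s hs h
  rcases le_total r.2 s.2 with h2 | h2
  · exact hF.eq hr hs ⟨h.le, h2⟩
  · exact (hF.eq hs hr ⟨h.ge, h2⟩).symm

theorem injOn_snd {F : Set (α × β)} (hF : IsAntichain (· ≤ ·) F) : F.InjOn Prod.snd := by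
  intro r hr s hs h
  rcases le_total r.1 s.1 with h1 | h1
  · exact hF.eq hr hs ⟨h1, h.le⟩
  · exact (hF.eq hs hr ⟨h1, h.ge⟩).symm

theorem card_filter_fst_lt {F : Finset (α × β)} (hF : IsAntichain (· ≤ ·) (F : Set (α × β)))
    {r : α × β} (hr : r ∈ F) :
    #{a ∈ F.image Prod.fst | a < r.1} = #{b ∈ F.image Prod.snd | r.2 < b} := by
  rw [filter_image, filter_image,
    card_image_of_injOn (hF.injOn_fst.mono (coe_subset.2 (filter_subset _ _))),
    card_image_of_injOn (hF.injOn_snd.mono (coe_subset.2 (filter_subset _ _)))]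
  exact congrArg card (filter_congr fun s hs => hF.fst_lt_iff_snd_lt hs hr)

theorem subset_of_image_eq {F G : Finset (α × β)} (hF : IsAntichain (· ≤ ·) (F : Set (α × β)))
    (hG : IsAntichain (· ≤ ·) (G : Set (α × β))) (h₁ : F.image Prod.fst = G.image Prod.fst)
    (h₂ : F.image Prod.snd = G.image Prod.snd) : F ⊆ G := by
  intro r hr
  obtain ⟨s, hs, hsr⟩ := mem_image.1 (h₁ ▸ mem_image_of_mem Prod.fst hr)
  have hrank : #{b ∈ G.image Prod.snd | r.2 < b} = #{b ∈ G.image Prod.snd | s.2 < b} :=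
    calc #{b ∈ G.image Prod.snd | r.2 < b} = #{b ∈ F.image Prod.snd | r.2 < b} := by rw [h₂]
      _ = #{a ∈ F.image Prod.fst | a < r.1} := (hF.card_filter_fst_lt hr).symm
      _ = #{a ∈ G.image Prod.fst | a < s.1} := by rw [h₁, hsr]
      _ = #{b ∈ G.image Prod.snd | s.2 < b} := hG.card_filter_fst_lt hs
  have h2 : r.2 = s.2 := (G.image Prod.snd).strictAntiOn_card_filter_lt.injOn
    (h₂ ▸ mem_image_of_mem Prod.snd hr) (mem_image_of_mem Prod.snd hs) hrank
  rwa [Prod.ext hsr.symm h2]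

theorem eq_of_image_eq {F G : Finset (α × β)} (hF : IsAntichain (· ≤ ·) (F : Set (α × β)))
    (hG : IsAntichain (· ≤ ·) (G : Set (α × β))) (h₁ : F.image Prod.fst = G.image Prod.fst)
    (h₂ : F.image Prod.snd = G.image Prod.snd) : F = G :=
  (hF.subset_of_image_eq hG h₁ h₂).antisymm (hG.subset_of_image_eq hF h₁.symm h₂.symm)

end IsAntichain

theorem exists_isAntichain_image_eq (A : Finset α) (B : Finset β) (h : #A = #B) :
    ∃ F : Finset (α × β), IsAntichain (· ≤ ·) (F : Set (α × β)) ∧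
      F.image Prod.fst = A ∧ F.image Prod.snd = B := by
  set σ := A.orderEmbOfFin rfl
  set τ := B.orderEmbOfFin h.symm
  refine ⟨univ.image fun i => (σ i, τ i.rev), ?_, ?_, ?_⟩
  · rw [coe_image, coe_univ, Set.image_univ]
    rintro _ ⟨i, rfl⟩ _ ⟨j, rfl⟩ hne ⟨h₁, h₂⟩
    have hij : i ≤ j := σ.le_iff_le.1 h₁
    have hji : j ≤ i := Fin.rev_le_rev.1 (τ.le_iff_le.1 h₂)
    exact hne (by rw [le_antisymm hij hji])
  · rw [image_image]
    exact A.image_orderEmbOfFin_univ rfl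
  · rw [image_image, show Prod.snd ∘ (fun i => (σ i, τ i.rev)) = τ ∘ Fin.rev from rfl,
      ← image_image, image_univ_of_surjective Fin.rev_surjective]
    exact B.image_orderEmbOfFin_univ h.symm

theorem ncard_isAntichain_subset_product (s : Finset α) (t : Finset β) :
    {F : Finset (α × β) | F ⊆ s ×ˢ t ∧ IsAntichain (· ≤ ·) (F : Set (α × β))}.ncard =
      (#s + #t).choose #s := by
  set proj : Finset (α × β) → Finset α × Finset β := fun F => (F.image Prod.fst, F.image Prod.snd)
  have hinj : Set.InjOn proj {F | F ⊆ s ×ˢ t ∧ IsAntichain (· ≤ ·) (F : Set (α × β))} :=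
    fun F hF G hG h => hF.2.eq_of_image_eq hG.2 (congrArg Prod.fst h) (congrArg Prod.snd h)
  have himage : proj '' {F | F ⊆ s ×ˢ t ∧ IsAntichain (· ≤ ·) (F : Set (α × β))} =
      ↑{q ∈ s.powerset ×ˢ t.powerset | #q.2 = #q.1} := by
    ext ⟨A, B⟩
    simp only [Set.mem_image, Set.mem_ofPred_eq, coe_filter, mem_product, mem_powerset, proj,
      Prod.mk.injEq]
    constructor
    · rintro ⟨F, ⟨hst, hF⟩, rfl, rfl⟩
      refine ⟨⟨fun a ha => ?_, fun b hb => ?_⟩, ?_⟩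
      · obtain ⟨r, hr, rfl⟩ := mem_image.1 ha
        exact (mem_product.1 (hst hr)).1
      · obtain ⟨r, hr, rfl⟩ := mem_image.1 hb
        exact (mem_product.1 (hst hr)).2
      · rw [card_image_of_injOn hF.injOn_fst, card_image_of_injOn hF.injOn_snd]
    · rintro ⟨⟨hA, hB⟩, hcard⟩
      obtain ⟨F, hF, hFA, hFB⟩ := exists_isAntichain_image_eq A B hcard.symm
      refine ⟨F, ⟨fun r hr => mem_product.2 ⟨?_, ?_⟩, hF⟩, hFA, hFB⟩
      · exact hA (hFA ▸ mem_image_of_mem Prod.fst hr)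
      · exact hB (hFB ▸ mem_image_of_mem Prod.snd hr)
  rw [← hinj.ncard_image, himage, Set.ncard_coe_finset, card_filter_card_eq_powerset_product]

end ProductAntichain

section Chains

variable {α : Type*}

theorem List.IsChain.append_of_getLast? {R : α → α → Prop} {l l' : List α} {y : α}
    (h : l.IsChain R) (hy : l.getLast? = some y) (h' : (y :: l').IsChain R) :
    (l ++ l').IsChain R := by
  obtain ⟨s, rfl⟩ := List.getLast?_eq_some_iff.1 hy
  exact h.append_overlap h' (List.cons_ne_nil _ _)

theorem List.getLast?_append_of_getLast? {l l' : List α} {y : α} (hy : l.getLast? = some y) :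
    (l ++ l').getLast? = (y :: l').getLast? := by
  obtain ⟨s, rfl⟩ := List.getLast?_eq_some_iff.1 hy
  simp [List.getLast?_cons]

theorem List.Pairwise.mem_Icc_of_head?_of_getLast? [Preorder α] {l : List α}
    (h : l.Pairwise (· ≤ ·)) {x z : α} (hx : l.head? = some x) (hz : l.getLast? = some z)
    {y : α} (hy : y ∈ l) : y ∈ Set.Icc x z := by
  obtain ⟨t, rfl⟩ := List.head?_eq_some_iff.1 hx
  obtain ⟨s, hs⟩ := List.getLast?_eq_some_iff.1 hz
  refine ⟨?_, ?_⟩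
  · rcases List.mem_cons.1 hy with rfl | hy
    exacts [le_rfl, List.rel_of_pairwise_cons h hy]
  · rw [hs] at h hy
    rcases List.mem_append.1 hy with hy | hy
    · exact (List.pairwise_append.1 h).2.2 y hy z (List.mem_singleton_self z)
    · rw [List.mem_singleton.1 hy]

theorem exists_isChain_covBy [PartialOrder α] [LocallyFiniteOrder α] {x y : α} (h : x ≤ y) :
    ∃ l, (x :: l).IsChain (· ⋖ ·) ∧ (x :: l).getLast? = some y ∧
      ∀ z ∈ x :: l, z ∈ Set.Icc x y := by
  obtain ⟨l, hl, hy⟩ :=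
    List.exists_isChain_cons_of_relationReflTransGen (le_iff_reflTransGen_covBy.1 h)
  have hlast : (x :: l).getLast? = some y := by
    rw [List.getLast?_eq_some_getLast (List.cons_ne_nil x l), hy]
  refine ⟨l, hl, hlast, fun z hz => ?_⟩
  exact (List.isChain_iff_pairwise.1 (hl.imp fun _ _ => CovBy.le)).mem_Icc_of_head?_of_getLast?
    rfl hlast hz

theorem List.add_le_sum_map_of_mem {ι : Type*} [DecidableEq ι] {l : List ι} (hl : l.Nodup)
    (f : ι → ℕ) {x y : ι} (hx : x ∈ l) (hy : y ∈ l) (hxy : x ≠ y) :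
    f x + f y ≤ (l.map f).sum :=
  calc f x + f y = ∑ z ∈ {x, y}, f z := (Finset.sum_pair hxy).symm
    _ ≤ ∑ z ∈ l.toFinset, f z := sum_le_sum_of_subset (by simp [insert_subset_iff, hx, hy])
    _ = (l.map f).sum := List.sum_toFinset f hl

end Chains

section DyckPath

variable {n : ℕ}

theorem dyckStep_iff_covBy {r r' : Fin n × Fin n} :
    (((r'.1 : ℕ) = r.1 + 1 ∧ r'.2 = r.2) ∨ (r'.1 = r.1 ∧ (r'.2 : ℕ) = r.2 + 1)) ↔ r ⋖ r' := by
  obtain ⟨a, b⟩ := r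
  obtain ⟨a', b'⟩ := r'
  simp only [Prod.mk_covBy_mk_iff, Fin.covBy_iff, Nat.covBy_iff_add_one_eq, Fin.ext_iff]
  omega

namespace IsDyckPath

variable {L : List (Fin n × Fin n)}

theorem isChain_covBy (h : IsDyckPath L) : L.IsChain (· ⋖ ·) :=
  List.IsChain.imp (fun _ _ => dyckStep_iff_covBy.1) h.2.2.2.2

theorem pairwise_lt (h : IsDyckPath L) : L.Pairwise (· < ·) :=
  List.isChain_iff_pairwise.1 (h.isChain_covBy.imp fun _ _ => CovBy.lt)

theorem nodup (h : IsDyckPath L) : L.Nodup :=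
  h.pairwise_lt.imp ne_of_lt

theorem isChain_le (h : IsDyckPath L) : IsChain (· ≤ ·) {r | r ∈ L} := by
  have hle := h.pairwise_lt.imp le_of_lt
  exact fun r hr s hs _ => List.Pairwise.forall_of_forall_of_flip (R := fun r s => r ≤ s ∨ s ≤ r)
    (fun _ _ => Or.inl le_rfl) (hle.imp Or.inl) (hle.imp Or.inr) hr hs

theorem mem_Icc (h : IsDyckPath L) {a b : Fin n} (ha : L.head? = some (a, a))
    (hb : L.getLast? = some (b, b)) {r : Fin n × Fin n} (hr : r ∈ L) :
    r ∈ Set.Icc (a, a) (b, b) :=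
  (h.pairwise_lt.imp le_of_lt).mem_Icc_of_head?_of_getLast? ha hb hr

end IsDyckPath

theorem exists_isDyckPath {a a' b b' : Fin n} (h₁ : a ≤ a') (h₂ : a' ≤ b) (h₃ : b ≤ b') :
    ∃ L, IsDyckPath L ∧ L.head? = some (a, a) ∧ L.getLast? = some (b', b') ∧
      (a, b) ∈ L ∧ (a', b') ∈ L := by
  obtain ⟨l₁, hc₁, hl₁, hm₁⟩ :=
    exists_isChain_covBy (show ((a, a) : Fin n × Fin n) ≤ (a, b) from ⟨le_rfl, h₁.trans h₂⟩)
  obtain ⟨l₂, hc₂, hl₂, hm₂⟩ :=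
    exists_isChain_covBy (show ((a, b) : Fin n × Fin n) ≤ (a', b') from ⟨h₁, h₃⟩)
  obtain ⟨l₃, hc₃, hl₃, hm₃⟩ :=
    exists_isChain_covBy (show ((a', b') : Fin n × Fin n) ≤ (b', b') from ⟨h₂.trans h₃, le_rfl⟩)
  have hl₁₂ := List.getLast?_append_of_getLast? (l' := l₂) hl₁
  rw [hl₂] at hl₁₂
  have hc := (hc₁.append_of_getLast? hl₁ hc₂).append_of_getLast? hl₁₂ hc₃
  have hl := List.getLast?_append_of_getLast? (l' := l₃) hl₁₂
  rw [hl₃] at hl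
  have hmem : ∀ r ∈ (a, a) :: l₁ ++ l₂ ++ l₃,
      r ∈ (a, a) :: l₁ ∨ r ∈ (a, b) :: l₂ ∨ r ∈ (a', b') :: l₃ := by
    intro r hr
    simp only [List.mem_append, List.mem_cons] at hr ⊢
    tauto
  refine ⟨_, ⟨List.cons_ne_nil _ _, fun r hr => ?_, ⟨a, rfl⟩, ⟨b', hl⟩,
    hc.imp fun _ _ => dyckStep_iff_covBy.2⟩, rfl, hl, ?_, ?_⟩
  · rcases hmem r hr with hr | hr | hr
    · exact (hm₁ r hr).2.1.trans (hm₁ r hr).1.2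
    · exact (hm₂ r hr).2.1.trans (h₂.trans (hm₂ r hr).1.2)
    · exact (hm₃ r hr).2.1.trans (hm₃ r hr).1.2
  · exact List.mem_append_left _ (List.mem_append_left _ (List.mem_of_getLast? hl₁))
  · exact List.mem_append_left _ (List.mem_of_getLast? hl₁₂)

end DyckPath

def pairIndicator {α β : Type*} [DecidableEq α] [DecidableEq β] (F : Finset (α × β)) :
    α → β → ℕ :=
  fun a b => if (a, b) ∈ F then 1 else 0

theorem pairIndicator_injective {α β : Type*} [DecidableEq α] [DecidableEq β] :
    Function.Injective (pairIndicator (α := α) (β := β)) := by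
  intro F G h
  ext ⟨a, b⟩
  have hab := congrFun (congrFun h a) b
  simp only [pairIndicator] at hab
  split_ifs at hab <;> simp_all

def dyckLatticePoints (n : ℕ) (k : Fin n) : Set (Fin n → Fin n → ℕ) :=
  {p | (∀ a b : Fin n, ¬ a ≤ b → p a b = 0) ∧
    ∀ (L : List (Fin n × Fin n)) (a b : Fin n),
      IsDyckPath L → L.head? = some (a, a) → L.getLast? = some (b, b) →
        (L.map fun r => p r.1 r.2).sum ≤ (if a ≤ k ∧ k ≤ b then 1 else 0)}

namespace dyckLatticePoints

variable {n : ℕ} {k : Fin n} {p : Fin n → Fin n → ℕ}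

theorem le_ite (hp : p ∈ dyckLatticePoints n k) (a b : Fin n) :
    p a b ≤ if a ≤ k ∧ k ≤ b then 1 else 0 := by
  by_cases hab : a ≤ b
  · obtain ⟨L, hL, ha, hb, hmem, -⟩ := exists_isDyckPath le_rfl hab le_rfl
    exact (List.le_sum_of_mem (List.mem_map_of_mem (f := fun r => p r.1 r.2) hmem)).trans
      (hp.2 L a b hL ha hb)
  · simp [hp.1 a b hab]

theorem mem_band_of_ne_zero (hp : p ∈ dyckLatticePoints n k) {a b : Fin n} (h : p a b ≠ 0) :
    a ≤ k ∧ k ≤ b := by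
  by_contra hk
  have hle := le_ite hp a b
  rw [if_neg hk] at hle
  omega

theorem eq_of_le (hp : p ∈ dyckLatticePoints n k) {r s : Fin n × Fin n}
    (hr : p r.1 r.2 ≠ 0) (hs : p s.1 s.2 ≠ 0) (hrs : r ≤ s) : r = s := by
  obtain ⟨hr₁, hr₂⟩ := mem_band_of_ne_zero hp hr
  obtain ⟨hs₁, -⟩ := mem_band_of_ne_zero hp hs
  by_contra hne
  obtain ⟨L, hL, ha, hb, hmr, hms⟩ := exists_isDyckPath hrs.1 (hs₁.trans hr₂) hrs.2
  have hsum := List.add_le_sum_map_of_mem hL.nodup (fun r => p r.1 r.2) hmr hms hne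
  dsimp only at hsum
  have hbound := hp.2 L _ _ hL ha hb
  rw [if_pos ⟨hr₁, hr₂.trans hrs.2⟩] at hbound
  omega

theorem pairIndicator_mem {F : Finset (Fin n × Fin n)} (hFk : F ⊆ Iic k ×ˢ Ici k)
    (hF : IsAntichain (· ≤ ·) (F : Set (Fin n × Fin n))) :
    pairIndicator F ∈ dyckLatticePoints n k := by
  have hband : ∀ r ∈ F, r.1 ≤ k ∧ k ≤ r.2 := fun r hr => by simpa using hFk hr
  refine ⟨fun a b hab => if_neg fun h => hab ((hband _ h).1.trans (hband _ h).2),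
    fun L a b hL ha hb => ?_⟩
  have hsum : (L.map fun r => pairIndicator F r.1 r.2).sum = #(L.toFinset ∩ F) := by
    rw [← List.sum_toFinset _ hL.nodup]
    simp [pairIndicator]
  rw [hsum]
  split_ifs with hk
  · exact card_le_one.2 fun r hr s hs =>
      inter_subsingleton_of_isChain_of_isAntichain hL.isChain_le hF
        (by simpa using hr) (by simpa using hs)
  · refine (card_eq_zero.2 (eq_empty_of_forall_notMem fun r hr => hk ?_)).le
    obtain ⟨hrL, hrF⟩ := mem_inter.1 hr
    obtain ⟨⟨har, -⟩, -, hrb⟩ := hL.mem_Icc ha hb (List.mem_toFinset.1 hrL)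
    exact ⟨har.trans (hband r hrF).1, (hband r hrF).2.trans hrb⟩

theorem eq_image_pairIndicator :
    dyckLatticePoints n k = pairIndicator ''
      {F | F ⊆ Iic k ×ˢ Ici k ∧ IsAntichain (· ≤ ·) (F : Set (Fin n × Fin n))} := by
  ext p
  refine ⟨fun hp => ⟨({r | p r.1 r.2 ≠ 0} : Finset (Fin n × Fin n)), ⟨?_, ?_⟩, ?_⟩, ?_⟩
  · intro r hr
    simpa using mem_band_of_ne_zero hp (mem_filter.1 hr).2
  · intro r hr s hs hne hrs
    exact hne (eq_of_le hp (by simpa using hr) (by simpa using hs) hrs)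
  · funext a b
    have hle := le_ite hp a b
    simp only [pairIndicator, mem_filter, mem_univ, true_and]
    split_ifs at hle ⊢ <;> omega
  · rintro ⟨F, ⟨hFk, hF⟩, rfl⟩
    exact pairIndicator_mem hFk hF

end dyckLatticePoints

/-- the number of lattice points of the type `A_n` Dyck-path
polytope of the fundamental weight `ω_{k+1}` (0-based `k : Fin n`) equals
`binom (n+1) (k+1)`, the dimension of `Λ^{k+1}(ℂ^{n+1})`.  The lattice points are
tuples `p = (p_{a,b})_{a ≤ b}` of non-negative integers such that for every Dyck
path from `α_a` to `α_b` the sum of the coordinates along the path is at most `1`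
if `a ≤ k ≤ b` and at most `0` otherwise. -/
theorem stmt14 (n : ℕ) (k : Fin n) :
    {p : Fin n → Fin n → ℕ |
        (∀ a b : Fin n, ¬ a ≤ b → p a b = 0) ∧
        ∀ (L : List (Fin n × Fin n)) (a b : Fin n),
          IsDyckPath L → L.head? = some (a, a) → L.getLast? = some (b, b) →
            (L.map fun r => p r.1 r.2).sum ≤ (if a ≤ k ∧ k ≤ b then 1 else 0)}.ncard
      = Nat.choose (n + 1) (k + 1) := by
  change (dyckLatticePoints n k).ncard = _
  rw [dyckLatticePoints.eq_image_pairIndicator,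
    Set.ncard_image_of_injective _ pairIndicator_injective, ncard_isAntichain_subset_product,
    Fin.card_Iic, Fin.card_Ici]
  congr 1
  omega
end
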